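/- With notation as in the paper's wall-crossing setup, suppose Z_i = (S_i 𝒜)(S_{−i} 𝒜)^{−1} and Z'_i = (S_i 𝒜')(S_{−i} 𝒜')^{−1} for invertible formal series 𝒜, 𝒜' in the completed quantum affine space with constant term 1. If Σ(𝒜') 𝒜 = 1 (i.e. 𝒜 = Σ(𝒜')^{−1}), then Z_i = Σ(Z'_i) for every vertex i. Conversely, if Z_i = Σ(Z'_i) for all i ∈ Q_0, then Σ(𝒜')𝒜 = 1. -/
import Mathlib


/-- Wall-crossing duality. In the completed quantum affine space `A`, with the
anti-involution `Σ` (written `Sg`), the algebra automorphisms `S_{±i}` (written `Splus`,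
`Sminus`), the constant-term projection `ε`, and invertible series `𝒜, 𝒜'` with constant
term `1`, setting `Z_i = (S_i 𝒜)(S_{−i} 𝒜)⁻¹` and `Z'_i = (S_i 𝒜')(S_{−i} 𝒜')⁻¹`, one has
`Σ(𝒜')·𝒜 = 1` if and only if `Z_i = Σ(Z'_i)` for every vertex `i`. -/
theorem stmt6 {Q0 A : Type} [Ring A]
    (Sg : A → A) (Splus Sminus : Q0 → A →+* A)
    (hSgmul : ∀ a b : A, Sg (a * b) = Sg b * Sg a)
    (hSgone : Sg 1 = 1) (hSgSg : ∀ a : A, Sg (Sg a) = a)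
    (hcomm : ∀ (i : Q0) (a : A), Sg (Splus i a) = Sminus i (Sg a))
    (hcomm' : ∀ (i : Q0) (a : A), Sg (Sminus i a) = Splus i (Sg a))
    (ε : A →+* A) (hεSg : ∀ a : A, ε (Sg a) = Sg (ε a))
    (hkey : ∀ B : A, (∀ i : Q0, Splus i B = Sminus i B) → B = ε B)
    (𝒜 𝒜' 𝒜inv 𝒜'inv : A)
    (h1 : 𝒜 * 𝒜inv = 1) (h2 : 𝒜inv * 𝒜 = 1)
    (h3 : 𝒜' * 𝒜'inv = 1) (h4 : 𝒜'inv * 𝒜' = 1)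
    (hε1 : ε 𝒜 = 1) (hε2 : ε 𝒜' = 1)
    (Z Z' : Q0 → A)
    (hZ : ∀ i, Z i = Splus i 𝒜 * Sminus i 𝒜inv)
    (hZ' : ∀ i, Z' i = Splus i 𝒜' * Sminus i 𝒜'inv) :
    (Sg 𝒜' * 𝒜 = 1) ↔ (∀ i : Q0, Z i = Sg (Z' i)) := by
  have hSg1 : Sg 𝒜' * Sg 𝒜'inv = 1 := by
    rw [← hSgmul, h4, hSgone]
  have hSg2 : Sg 𝒜'inv * Sg 𝒜' = 1 := by
    rw [← hSgmul, h3, hSgone]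
  have hSgZ' : ∀ i, Sg (Z' i) = Splus i (Sg 𝒜'inv) * Sminus i (Sg 𝒜') := by
    intro i
    rw [hZ' i, hSgmul, hcomm', hcomm]
  constructor
  · intro h i
    have hAinv : 𝒜inv = Sg 𝒜' := by
      calc 𝒜inv = Sg 𝒜' * 𝒜 * 𝒜inv := by rw [h, one_mul]
        _ = Sg 𝒜' := by rw [mul_assoc, h1, mul_one]
    have hA : 𝒜 = Sg 𝒜'inv := by
      calc 𝒜 = Sg 𝒜'inv * Sg 𝒜' * 𝒜 := by rw [hSg2, one_mul]
        _ = Sg 𝒜'inv := by rw [mul_assoc, h, mul_one]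
    rw [hZ i, hSgZ' i, hA, hAinv]
  · intro h
    have hB : ∀ i, Splus i (Sg 𝒜' * 𝒜) = Sminus i (Sg 𝒜' * 𝒜) := by
      intro i
      have e := (h i).symm
      rw [hZ i, hSgZ' i] at e
      have e2 : Splus i (Sg 𝒜') * (Splus i (Sg 𝒜'inv) * Sminus i (Sg 𝒜')) * Sminus i 𝒜
          = Splus i (Sg 𝒜') * (Splus i 𝒜 * Sminus i 𝒜inv) * Sminus i 𝒜 := by rw [e]
      calc Splus i (Sg 𝒜' * 𝒜)
          = Splus i (Sg 𝒜') * Splus i 𝒜 := by rw [map_mul]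
        _ = Splus i (Sg 𝒜') * Splus i 𝒜 * 1 := by rw [mul_one]
        _ = Splus i (Sg 𝒜') * Splus i 𝒜 * Sminus i (𝒜inv * 𝒜) := by rw [h2, map_one]
        _ = Splus i (Sg 𝒜') * (Splus i 𝒜 * Sminus i 𝒜inv) * Sminus i 𝒜 := by
            rw [map_mul]; noncomm_ring
        _ = Splus i (Sg 𝒜') * (Splus i (Sg 𝒜'inv) * Sminus i (Sg 𝒜')) * Sminus i 𝒜 := e2.symm
        _ = Splus i (Sg 𝒜' * Sg 𝒜'inv) * (Sminus i (Sg 𝒜') * Sminus i 𝒜) := by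
            rw [map_mul]; noncomm_ring
        _ = Sminus i (Sg 𝒜' * 𝒜) := by rw [hSg1, map_one, one_mul, map_mul]
    have := hkey _ hB
    rw [this, map_mul, hεSg, hε1, hε2, hSgone, mul_one]
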